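/- Let A, B, C be finite-dimensional real vector spaces, let f : A → B and g : B → C be linear maps with image(f) = kernel(g) (exactness at B), and let α : A → A, β : B → B, γ : C → C be linear endomorphisms satisfying f ∘ α = β ∘ f and g ∘ β = γ ∘ g. If λ is a real eigenvalue of β (i.e., β(v) = λ·v for some nonzero v ∈ B), then λ is a real eigenvalue of α or λ is a real eigenvalue of γ. -/
import Mathlib


theorem stmt_9 (A B C : Type*) [AddCommGroup A] [Module ℝ A] [FiniteDimensional ℝ A]
    [AddCommGroup B] [Module ℝ B] [FiniteDimensional ℝ B]
    [AddCommGroup C] [Module ℝ C] [FiniteDimensional ℝ C]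
    (f : A →ₗ[ℝ] B) (g : B →ₗ[ℝ] C) (hexact : LinearMap.range f = LinearMap.ker g)
    (α : A →ₗ[ℝ] A) (β : B →ₗ[ℝ] B) (γ : C →ₗ[ℝ] C)
    (hfα : f ∘ₗ α = β ∘ₗ f) (hgβ : g ∘ₗ β = γ ∘ₗ g)
    (lam : ℝ) (v : B) (hv : v ≠ 0) (hβv : β v = lam • v) :
    (∃ a : A, a ≠ 0 ∧ α a = lam • a) ∨ (∃ c : C, c ≠ 0 ∧ γ c = lam • c) := by
  by_cases hgv : g v = 0
  · -- v ∈ ker g = range f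
    have hvr : v ∈ LinearMap.range f := by rw [hexact]; exact hgv
    obtain ⟨a, ha⟩ := hvr
    left
    by_contra hno
    push_neg at hno
    set α' : A →ₗ[ℝ] A := α - lam • LinearMap.id with hα'
    have hinj : Function.Injective α' := by
      rw [← LinearMap.ker_eq_bot, LinearMap.ker_eq_bot']
      intro m hm
      by_contra hm0
      exact hno m hm0 (by
        have : α m - lam • m = 0 := hm
        linear_combination (norm := module) this)
    -- ker f is invariant under α'
    have hinv : ∀ x ∈ LinearMap.ker f, α' x ∈ LinearMap.ker f := by
      intro x hx
      have hfx : f x = 0 := hx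
      have h1 : f (α x) = β (f x) := congrFun (congrArg DFunLike.coe hfα) x
      have : f (α' x) = f (α x) - lam • f x := by
        simp [hα', LinearMap.sub_apply, LinearMap.smul_apply]
      simp [LinearMap.mem_ker, this, h1, hfx]
    set r := α'.restrict hinv with hr
    have hrinj : Function.Injective r := fun x y hxy => by
      apply Subtype.ext
      exact hinj (congrArg Subtype.val hxy)
    have hrsurj : Function.Surjective r :=
      (LinearMap.injective_iff_surjective).mp hrinj
    -- α' a ∈ ker f
    have hfa : f (α' a) = 0 := by
      have h1 : f (α a) = β (f a) := congrFun (congrArg DFunLike.coe hfα) a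
      have : f (α' a) = f (α a) - lam • f a := by
        simp [hα', LinearMap.sub_apply, LinearMap.smul_apply]
      rw [this, h1, ha, hβv, sub_self]
    obtain ⟨⟨w, hw⟩, hww⟩ := hrsurj ⟨α' a, hfa⟩
    have hwa : α' w = α' a := congrArg Subtype.val hww
    have : w = a := hinj hwa
    have : a ∈ LinearMap.ker f := this ▸ hw
    exact hv (by rw [← ha]; exact this)
  · right
    refine ⟨g v, hgv, ?_⟩
    have h1 : g (β v) = γ (g v) := congrFun (congrArg DFunLike.coe hgβ) v
    rw [← h1, hβv, map_smul]
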